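/- Normal form for derived method operations: for every nonempty set S, every functional unit H for S, and every instruction sequence x over I(H), there exists an instruction sequence y over I(H) of the form u_1,…,u_k,!t,!f, in which each u_i is a positive test instruction, a forward jump instruction, or a backward jump instruction, such that ⌈y⌉_H = ⌈x⌉_H as partial functions from S to Bool × S. -/

import Mathlib

/-- Primitive instructions: plain basic `f.m`, positive test `+f.m`, negative test `-f.m`
(method names are natural numbers, there is a single focus `f`), forward jump `#l`,
backward jump `\l`, and the positive/negative termination instructions `!t` / `!f`. -/
inductive Instr : Type where
  | basic (m : ℕ)
  | postest (m : ℕ)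
  | negtest (m : ℕ)
  | fjump (l : ℕ)
  | bjump (l : ℕ)
  | haltT
  | haltF
deriving DecidableEq

/-- A functional unit for a state space `S`: a finite, functional set of
(method name, method operation) pairs, where a method operation is a total
function `S → Bool × S`. -/
structure FU (S : Type*) where
  carrier : Set (ℕ × (S → Bool × S))
  finite : carrier.Finite
  functional : ∀ {m : ℕ} {M M' : S → Bool × S},
    (m, M) ∈ carrier → (m, M') ∈ carrier → M = M'

/-- The interface of a functional unit: the set of method names occurring in it. -/
def FU.iface {S : Type*} (H : FU S) : Set ℕ := {m | ∃ M, (m, M) ∈ H.carrier}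

/-- The method operation named `m` in `H` (an arbitrary fixed value if `m ∉ I(H)`). -/
noncomputable def FU.op {S : Type*} (H : FU S) (m : ℕ) (s : S) : Bool × S :=
  letI := Classical.propDecidable
  if h : ∃ M, (m, M) ∈ H.carrier then h.choose s else (true, s)

/-- The restriction `⟨I, H⟩` of a functional unit to a set `I` of method names. -/
def FU.restrict {S : Type*} (H : FU S) (I : Set ℕ) : FU S where
  carrier := {p ∈ H.carrier | p.1 ∈ I}
  finite := H.finite.subset (Set.sep_subset _ _)
  functional := fun hM hM' => H.functional hM.1 hM'.1

/-- The method names used by an instruction all belong to `I`. -/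
def Instr.namesIn (I : Set ℕ) : Instr → Prop
  | .basic m => m ∈ I
  | .postest m => m ∈ I
  | .negtest m => m ∈ I
  | _ => True

/-- An instruction sequence over a set `I` of method names: a finite nonempty list of
primitive instructions whose method names belong to `I`. -/
def InstrSeqOver (I : Set ℕ) (x : List Instr) : Prop :=
  x ≠ [] ∧ ∀ u ∈ x, u.namesIn I

/-- `Exec H x i s b s'` : execution of the instruction sequence `x` on the functional
unit `H`, from (0-based) position `i` in state `s`, terminates delivering the Boolean
value `b` with final state `s'`.  (Position `i` here corresponds to the 1-based
position `i+1`; positions outside the sequence, jumps `#0`/`\0`, and infinite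
executions admit no derivation, i.e. execution does not terminate.) -/
inductive Exec {S : Type*} (H : FU S) (x : List Instr) : ℕ → S → Bool → S → Prop where
  | basic {i : ℕ} {s : S} {b : Bool} {s' : S} (m : ℕ)
      (hu : x[i]? = some (Instr.basic m))
      (h : Exec H x (i + 1) (H.op m s).2 b s') : Exec H x i s b s'
  | posT {i : ℕ} {s : S} {b : Bool} {s' : S} (m : ℕ)
      (hu : x[i]? = some (Instr.postest m)) (hr : (H.op m s).1 = true)
      (h : Exec H x (i + 1) (H.op m s).2 b s') : Exec H x i s b s'
  | posF {i : ℕ} {s : S} {b : Bool} {s' : S} (m : ℕ)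
      (hu : x[i]? = some (Instr.postest m)) (hr : (H.op m s).1 = false)
      (h : Exec H x (i + 2) (H.op m s).2 b s') : Exec H x i s b s'
  | negT {i : ℕ} {s : S} {b : Bool} {s' : S} (m : ℕ)
      (hu : x[i]? = some (Instr.negtest m)) (hr : (H.op m s).1 = true)
      (h : Exec H x (i + 2) (H.op m s).2 b s') : Exec H x i s b s'
  | negF {i : ℕ} {s : S} {b : Bool} {s' : S} (m : ℕ)
      (hu : x[i]? = some (Instr.negtest m)) (hr : (H.op m s).1 = false)
      (h : Exec H x (i + 1) (H.op m s).2 b s') : Exec H x i s b s'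
  | fjump {i : ℕ} {s : S} {b : Bool} {s' : S} (l : ℕ)
      (hu : x[i]? = some (Instr.fjump l))
      (h : Exec H x (i + l) s b s') : Exec H x i s b s'
  | bjump {i : ℕ} {s : S} {b : Bool} {s' : S} (l : ℕ)
      (hu : x[i]? = some (Instr.bjump l)) (hl : l ≤ i)
      (h : Exec H x (i - l) s b s') : Exec H x i s b s'
  | haltT {i : ℕ} {s : S} (hu : x[i]? = some Instr.haltT) : Exec H x i s true s
  | haltF {i : ℕ} {s : S} (hu : x[i]? = some Instr.haltF) : Exec H x i s false s

/-- `M` is a derived method operation of `H`: there is an instruction sequence `x`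
over `I(H)` whose produced partial method operation `⌈x⌉_H` is total and equals `M`. -/
def DerivedOp {S : Type*} (H : FU S) (M : S → Bool × S) : Prop :=
  ∃ x : List Instr, InstrSeqOver H.iface x ∧ ∀ s, Exec H x 0 s (M s).1 (M s).2

/-- `H ≤ H'` : every method operation of `H` is a derived method operation of `H'`. -/
def FU.le {S : Type*} (H H' : FU S) : Prop :=
  ∀ m M, (m, M) ∈ H.carrier → DerivedOp H' M

/-- `H ≡ H'` : `H ≤ H'` and `H' ≤ H`. -/
def FU.equiv {S : Type*} (H H' : FU S) : Prop := FU.le H H' ∧ FU.le H' H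

/-- A method operation on ℕ is computable if both its components are. -/
def ComputableMO (M : ℕ → Bool × ℕ) : Prop :=
  Computable (fun n => (M n).1) ∧ Computable (fun n => (M n).2)

/-- A functional unit for ℕ is computable if all its method operations are. -/
def ComputableFU (H : FU ℕ) : Prop :=
  ∀ m M, (m, M) ∈ H.carrier → ComputableMO M

/-!
Each instruction of `x`, at position `i`, is replaced by a block of three instructions at
positions `3 i, 3 i + 1, 3 i + 2`. A basic or test instruction on `m` becomes `+f.m` followed by
two forward jumps, taken on reply true and false respectively, to the blocks of its successors;
jumps are scaled by three, and `!t`, `!f` jump to the final `!t`, `!f`. A run of `x` from `i` is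
then mirrored by a run of the compiled sequence from `3 i`; conversely, by induction on runs of
the compiled sequence, every terminating run from any of its positions decodes into a run of `x`.
-/

namespace List

variable {α : Type*}

theorem length_flatten_of_forall_length_eq {L : List (List α)} {k : ℕ}
    (hL : ∀ l ∈ L, l.length = k) : L.flatten.length = k * L.length := by
  rw [length_flatten, map_congr_left hL, map_const', sum_replicate, smul_eq_mul, mul_comm]

theorem getElem?_flatten_of_forall_length_eq {L : List (List α)} {k : ℕ}
    (hL : ∀ l ∈ L, l.length = k) {j r : ℕ} (hr : r < k) :
    L.flatten[k * j + r]? = L[j]?.bind (·[r]?) := by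
  induction L generalizing j with
  | nil => simp
  | cons l L ih =>
    rw [forall_mem_cons] at hL
    rw [flatten_cons]
    cases j with
    | zero => simp [getElem?_append_left (hL.1 ▸ hr : r < l.length)]
    | succ j =>
      rw [getElem?_append_right (by rw [hL.1]; nlinarith), hL.1,
        show k * (j + 1) + r - k = k * j + r by rw [Nat.mul_succ]; omega]
      simpa using ih hL.2

end List

namespace Instr

def method? : Instr → Option ℕ
  | basic m | postest m | negtest m => some m
  | _ => none

/-- The distance from a basic or test instruction `u` to the instruction executed next when
its method replies `c`. -/
def offset : Instr → Bool → ℕ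
  | postest _, c => if c then 1 else 2
  | negtest _, c => if c then 2 else 1
  | _, _ => 1

theorem one_le_offset (u : Instr) (c : Bool) : 1 ≤ u.offset c := by
  cases u <;> cases c <;> simp [offset]

theorem offset_postest (m : ℕ) (c : Bool) : (postest m).offset c = if c then 1 else 2 := rfl

end Instr

theorem Exec.of_offset {S : Type*} {H : FU S} {y : List Instr} {i m : ℕ} {u : Instr} {s s' : S}
    {b : Bool} (hu : y[i]? = some u) (hm : u.method? = some m)
    (h : Exec H y (i + u.offset (H.op m s).1) (H.op m s).2 b s') : Exec H y i s b s' := by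
  cases hr : (H.op m s).1 <;> rw [hr] at h <;>
    cases u <;> simp only [Instr.method?, reduceCtorEq, Option.some.injEq] at hm <;> subst hm <;>
    simp only [Instr.offset] at h <;>
    first
      | exact .basic _ hu h
      | exact .posT _ hu hr h | exact .posF _ hu hr h
      | exact .negT _ hu hr h | exact .negF _ hu hr h

namespace NormalForm

/-- The jumps at `3 i + 1` (reply `true`) and `3 i + 2` (reply `false`) land on the block
`3 (i + u.offset c)` of the successor. -/
def testBlock (m : ℕ) (u : Instr) : List Instr :=
  [.postest m, .fjump (3 * u.offset true - 1), .fjump (3 * u.offset false - 2)]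

def block (n i : ℕ) : Instr → List Instr
  | .basic m => testBlock m (.basic m)
  | .postest m => testBlock m (.postest m)
  | .negtest m => testBlock m (.negtest m)
  | .fjump l => [.fjump (3 * l), .fjump 0, .fjump 0]
  | .bjump l => [.bjump (3 * l), .fjump 0, .fjump 0]
  | .haltT => [.fjump (3 * n + 1 - 3 * i), .fjump 0, .fjump 0]
  | .haltF => [.fjump (3 * n + 2 - 3 * i), .fjump 0, .fjump 0]

/-- The final `#0` stands where a jump to the end of `x` lands, so that it cannot reach the
`!t` that follows. -/
def compile (x : List Instr) : List Instr :=
  (x.mapIdx (block x.length)).flatten ++ [.fjump 0]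

def normalForm (x : List Instr) : List Instr :=
  compile x ++ [.haltT, .haltF]

theorem length_block (n i : ℕ) (u : Instr) : (block n i u).length = 3 := by
  cases u <;> rfl

theorem block_of_method {n i m : ℕ} {u : Instr} (hm : u.method? = some m) :
    block n i u = testBlock m u := by
  cases u <;> simp_all [Instr.method?, block]

theorem mem_block {n i : ℕ} {u v : Instr} (hv : v ∈ block n i u) :
    (∃ m, v = .postest m) ∨ (∃ l, v = .fjump l) ∨ (∃ l, v = .bjump l) := by
  cases u <;> simp only [block, testBlock, List.mem_cons, List.not_mem_nil, or_false] at hv <;>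
    rcases hv with rfl | rfl | rfl <;> simp

theorem namesIn_of_mem_block {I : Set ℕ} {n i : ℕ} {u v : Instr} (hu : u.namesIn I)
    (hv : v ∈ block n i u) : v.namesIn I := by
  cases u <;> simp only [block, testBlock, List.mem_cons, List.not_mem_nil, or_false] at hv <;>
    rcases hv with rfl | rfl | rfl <;> first | exact hu | trivial

theorem mem_compile {x : List Instr} {v : Instr} (hv : v ∈ compile x) :
    v = .fjump 0 ∨ ∃ u ∈ x, ∃ i, v ∈ block x.length i u := by
  rcases List.mem_append.mp hv with hv | hv
  · obtain ⟨_, hl, hv⟩ := List.mem_flatten.mp hv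
    obtain ⟨i, hi, rfl⟩ := List.mem_mapIdx.mp hl
    exact .inr ⟨x[i], List.getElem_mem hi, i, hv⟩
  · exact .inl (List.mem_singleton.mp hv)

variable {x : List Instr} {p i r m l : ℕ} {u v : Instr} {c : Bool}

theorem length_of_mem_blocks (x : List Instr) :
    ∀ l ∈ x.mapIdx (block x.length), l.length = 3 := by
  rw [List.forall_mem_iff_getElem]
  simp [length_block]

theorem length_flatten_blocks (x : List Instr) :
    (x.mapIdx (block x.length)).flatten.length = 3 * x.length := by
  rw [List.length_flatten_of_forall_length_eq (length_of_mem_blocks x), List.length_mapIdx]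

theorem getElem?_normalForm_block (hu : x[i]? = some u) (hr : r < 3) :
    (normalForm x)[3 * i + r]? = (block x.length i u)[r]? := by
  have hi : i < x.length := (List.getElem?_eq_some_iff.mp hu).1
  rw [normalForm, compile, List.append_assoc,
    List.getElem?_append_left (by rw [length_flatten_blocks]; omega),
    List.getElem?_flatten_of_forall_length_eq (length_of_mem_blocks x) hr,
    List.getElem?_mapIdx, hu]
  rfl

theorem getElem?_normalForm_start (hu : x[i]? = some u) :
    (normalForm x)[3 * i]? = (block x.length i u)[0]? :=
  getElem?_normalForm_block hu (r := 0) (by norm_num)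

theorem getElem?_normalForm_tail (hr : r < 3) :
    (normalForm x)[3 * x.length + r]? = [.fjump 0, .haltT, .haltF][r]? := by
  rw [normalForm, compile, List.append_assoc,
    List.getElem?_append_right (by rw [length_flatten_blocks]; omega),
    length_flatten_blocks, Nat.add_sub_cancel_left]
  rfl

theorem getElem?_normalForm_slot (hu : x[i]? = some u) (hm : u.method? = some m) (c : Bool) :
    (normalForm x)[3 * i + if c then 1 else 2]? =
      some (.fjump (3 * u.offset c - if c then 1 else 2)) := by
  cases c <;> simp [getElem?_normalForm_block hu, block_of_method hm, testBlock]

theorem getElem?_normalForm_eq_some (h : (normalForm x)[p]? = some v) :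
    (∃ i u r, x[i]? = some u ∧ r < 3 ∧ p = 3 * i + r ∧
      (block x.length i u)[r]? = some v) ∨
      ∃ r < 3, p = 3 * x.length + r ∧ [.fjump 0, .haltT, .haltF][r]? = some v := by
  by_cases hp : p < 3 * x.length
  · have hi : p / 3 < x.length := by omega
    refine .inl ⟨p / 3, x[p / 3], p % 3, by simp, p.mod_lt (by norm_num),
      (Nat.div_add_mod p 3).symm, ?_⟩
    rwa [← getElem?_normalForm_block (by simp) (p.mod_lt (by norm_num)), Nat.div_add_mod]
  · have hlen : p < 3 * x.length + 3 := by
      have := (List.getElem?_eq_some_iff.mp h).1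
      simp only [normalForm, compile, List.length_append, length_flatten_blocks] at this
      omega
    refine .inr ⟨p - 3 * x.length, by omega, by omega, ?_⟩
    rwa [← getElem?_normalForm_tail (by omega), Nat.add_sub_cancel' (by omega)]

theorem getElem?_normalForm_postest (h : (normalForm x)[p]? = some (.postest m)) :
    ∃ i u, x[i]? = some u ∧ u.method? = some m ∧ p = 3 * i := by
  rcases getElem?_normalForm_eq_some h with ⟨i, u, r, hu, hr, rfl, hv⟩ | ⟨r, hr, -, hv⟩
  · cases u <;> interval_cases r <;> simp [block, testBlock] at hv <;>
      exact ⟨i, _, hu, by simp [Instr.method?, hv], rfl⟩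
  · interval_cases r <;> simp at hv

theorem getElem?_normalForm_bjump (h : (normalForm x)[p]? = some (.bjump l)) :
    ∃ i l', x[i]? = some (.bjump l') ∧ p = 3 * i ∧ l = 3 * l' := by
  rcases getElem?_normalForm_eq_some h with ⟨i, u, r, hu, hr, rfl, hv⟩ | ⟨r, hr, -, hv⟩
  · cases u <;> interval_cases r <;> simp [block, testBlock] at hv
    exact ⟨i, _, hu, rfl, hv.symm⟩
  · interval_cases r <;> simp at hv

theorem getElem?_normalForm_haltT (h : (normalForm x)[p]? = some .haltT) :
    p = 3 * x.length + 1 := by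
  rcases getElem?_normalForm_eq_some h with ⟨i, u, r, hu, hr, rfl, hv⟩ | ⟨r, hr, rfl, hv⟩
  · cases u <;> interval_cases r <;> simp [block, testBlock] at hv
  · interval_cases r <;> simp at hv ⊢

theorem getElem?_normalForm_haltF (h : (normalForm x)[p]? = some .haltF) :
    p = 3 * x.length + 2 := by
  rcases getElem?_normalForm_eq_some h with ⟨i, u, r, hu, hr, rfl, hv⟩ | ⟨r, hr, rfl, hv⟩
  · cases u <;> interval_cases r <;> simp [block, testBlock] at hv
  · interval_cases r <;> simp at hv ⊢

theorem getElem?_normalForm_fjump (h : (normalForm x)[p]? = some (.fjump l)) :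
    l = 0 ∨
    (∃ i u c, x[i]? = some u ∧ p = 3 * i + (if c then 1 else 2) ∧
      p + l = 3 * (i + u.offset c)) ∨
    (∃ i l', x[i]? = some (.fjump l') ∧ p = 3 * i ∧ l = 3 * l') ∨
    (∃ i, x[i]? = some .haltT ∧ p = 3 * i ∧ p + l = 3 * x.length + 1) ∨
    (∃ i, x[i]? = some .haltF ∧ p = 3 * i ∧ p + l = 3 * x.length + 2) := by
  rcases getElem?_normalForm_eq_some h with ⟨i, u, r, hu, hr, rfl, hv⟩ | ⟨r, hr, -, hv⟩
  · have hi : i < x.length := (List.getElem?_eq_some_iff.mp hu).1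
    cases hm : u.method? with
    | some m =>
      rw [block_of_method hm] at hv
      refine .inr (.inl ⟨i, u, ?_⟩)
      interval_cases r <;> simp only [testBlock, List.getElem?_cons_succ, List.getElem?_cons_zero,
        Option.some.injEq, Instr.fjump.injEq, reduceCtorEq] at hv <;> subst hv
      · exact ⟨true, hu, rfl, by have := u.one_le_offset true; omega⟩
      · exact ⟨false, hu, rfl, by have := u.one_le_offset false; omega⟩
    | none =>
      cases u <;> simp only [Instr.method?, reduceCtorEq] at hm <;> interval_cases r <;>
        simp only [block, List.getElem?_cons_succ, List.getElem?_cons_zero, Option.some.injEq,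
          Instr.fjump.injEq, reduceCtorEq] at hv <;> subst hv
      all_goals first
        | exact .inl rfl
        | exact .inr (.inr (.inl ⟨i, _, hu, rfl, rfl⟩))
        | exact .inr (.inr (.inr (.inl ⟨i, hu, rfl, by omega⟩)))
        | exact .inr (.inr (.inr (.inr ⟨i, hu, rfl, by omega⟩)))
  · interval_cases r <;> simp at hv
    exact .inl hv.symm

section Simulation

variable {S : Type*} {H : FU S} {s s' : S} {b : Bool}

/-- The invariant of the backward simulation: what a terminating run of `normalForm x` from
position `p` says about `x`. -/
structure SourceRun (H : FU S) (x : List Instr) (p : ℕ) (s : S) (b : Bool) (s' : S) : Prop where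
  start : ∀ i, p = 3 * i → Exec H x i s b s'
  slot : ∀ i u c, x[i]? = some u → p = 3 * i + (if c then 1 else 2) →
    Exec H x (i + u.offset c) s b s'
  haltT : p = 3 * x.length + 1 → b = true ∧ s' = s
  haltF : p = 3 * x.length + 2 → b = false ∧ s' = s

theorem SourceRun.of_exec (h : Exec H x i s b s') : SourceRun H x (3 * i) s b s' where
  start j hj := by rwa [show i = j by omega] at h
  slot j u c _ hj := by split_ifs at hj <;> omega
  haltT hp := by omega
  haltF hp := by omega

theorem SourceRun.of_slot (hu : x[i]? = some u) (h : Exec H x (i + u.offset c) s b s') :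
    SourceRun H x (3 * i + if c then 1 else 2) s b s' := by
  have hi : i < x.length := (List.getElem?_eq_some_iff.mp hu).1
  refine ⟨fun j hj => by split_ifs at hj <;> omega, fun j u' c' hu' hj => ?_,
    fun hp => by split_ifs at hp <;> omega, fun hp => by split_ifs at hp <;> omega⟩
  obtain ⟨rfl, rfl⟩ : j = i ∧ c' = c := by cases c <;> cases c' <;> simp at hj ⊢ <;> omega
  rwa [Option.some.inj (hu'.symm.trans hu)]

theorem SourceRun.of_haltT : SourceRun H x (3 * x.length + 1) s true s := by
  refine ⟨fun j hj => by omega, fun j u c hu hj => ?_, fun _ => ⟨rfl, rfl⟩,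
    fun hp => by omega⟩
  have hj' : j < x.length := (List.getElem?_eq_some_iff.mp hu).1
  split_ifs at hj <;> omega

theorem SourceRun.of_haltF : SourceRun H x (3 * x.length + 2) s false s := by
  refine ⟨fun j hj => by omega, fun j u c hu hj => ?_, fun hp => by omega,
    fun _ => ⟨rfl, rfl⟩⟩
  have hj' : j < x.length := (List.getElem?_eq_some_iff.mp hu).1
  split_ifs at hj <;> omega

theorem eq_postest_of_getElem?_normalForm (h : (normalForm x)[p]? = some v)
    (hm : v.method? = some m) : v = .postest m := by
  rcases List.mem_append.mp (List.mem_of_getElem? h) with hv | hv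
  · rcases mem_compile hv with rfl | ⟨u, -, i, hv⟩
    · simp [Instr.method?] at hm
    · rcases mem_block hv with ⟨m', rfl⟩ | ⟨l, rfl⟩ | ⟨l, rfl⟩ <;>
        simp_all [Instr.method?]
  · simp only [List.mem_cons, List.not_mem_nil, or_false] at hv
    rcases hv with rfl | rfl <;> simp [Instr.method?] at hm

theorem sourceRun_of_exec_normalForm (h : Exec H (normalForm x) p s b s') :
    SourceRun H x p s b s' := by
  induction h with
  | basic m hu _ _ => nomatch eq_postest_of_getElem?_normalForm hu rfl
  | negT m hu _ _ _ => nomatch eq_postest_of_getElem?_normalForm hu rfl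
  | negF m hu _ _ _ => nomatch eq_postest_of_getElem?_normalForm hu rfl
  | posT m hu hr _ ih =>
    obtain ⟨i, u, hi, hm, rfl⟩ := getElem?_normalForm_postest hu
    exact .of_exec (Exec.of_offset hi hm (hr ▸ ih.slot i u true hi rfl))
  | posF m hu hr _ ih =>
    obtain ⟨i, u, hi, hm, rfl⟩ := getElem?_normalForm_postest hu
    exact .of_exec (Exec.of_offset hi hm (hr ▸ ih.slot i u false hi rfl))
  | fjump l hu _ ih =>
    rcases getElem?_normalForm_fjump hu with
      rfl | ⟨i, u, c, hi, rfl, hl⟩ | ⟨i, l', hi, rfl, rfl⟩ | ⟨i, hi, rfl, hl⟩ |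
        ⟨i, hi, rfl, hl⟩
    · exact ih
    · exact .of_slot hi (ih.start _ hl)
    · exact .of_exec (.fjump l' hi (ih.start _ (by ring)))
    · obtain ⟨rfl, rfl⟩ := ih.haltT hl
      exact .of_exec (.haltT hi)
    · obtain ⟨rfl, rfl⟩ := ih.haltF hl
      exact .of_exec (.haltF hi)
  | bjump l hu hl _ ih =>
    obtain ⟨i, l', hi, rfl, rfl⟩ := getElem?_normalForm_bjump hu
    exact .of_exec (.bjump l' hi (by omega) (ih.start _ (by omega)))
  | haltT hu => exact getElem?_normalForm_haltT hu ▸ .of_haltT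
  | haltF hu => exact getElem?_normalForm_haltF hu ▸ .of_haltF

theorem exec_normalForm_of_method (hu : x[i]? = some u) (hm : u.method? = some m)
    (h : Exec H (normalForm x) (3 * (i + u.offset (H.op m s).1)) (H.op m s).2 b s') :
    Exec H (normalForm x) (3 * i) s b s' := by
  have h0 : (normalForm x)[3 * i]? = some (.postest m) := by
    simp [getElem?_normalForm_start hu, block_of_method hm, testBlock]
  refine Exec.of_offset h0 rfl (.fjump _ (getElem?_normalForm_slot hu hm _) ?_)
  convert h using 2
  have := u.one_le_offset (H.op m s).1
  rw [Instr.offset_postest]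
  split <;> omega

theorem exec_normalForm_of_exec (h : Exec H x i s b s') :
    Exec H (normalForm x) (3 * i) s b s' := by
  induction h with
  | basic m hu _ ih => exact exec_normalForm_of_method hu rfl ih
  | posT m hu hr _ ih | posF m hu hr _ ih | negT m hu hr _ ih | negF m hu hr _ ih =>
    exact exec_normalForm_of_method hu rfl (by simpa [Instr.offset, hr] using ih)
  | fjump l hu _ ih =>
    exact .fjump (3 * l) (by simp [getElem?_normalForm_start hu, block]) (by rwa [← mul_add])
  | bjump l hu hl _ ih =>
    exact .bjump (3 * l) (by simp [getElem?_normalForm_start hu, block]) (by omega)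
      (by rwa [← Nat.mul_sub])
  | @haltT i _ hu =>
    have hi : i < x.length := (List.getElem?_eq_some_iff.mp hu).1
    refine .fjump (3 * x.length + 1 - 3 * i) (by simp [getElem?_normalForm_start hu, block]) ?_
    rw [show 3 * i + (3 * x.length + 1 - 3 * i) = 3 * x.length + 1 by omega]
    exact .haltT (getElem?_normalForm_tail (r := 1) (by norm_num))
  | @haltF i _ hu =>
    have hi : i < x.length := (List.getElem?_eq_some_iff.mp hu).1
    refine .fjump (3 * x.length + 2 - 3 * i) (by simp [getElem?_normalForm_start hu, block]) ?_
    rw [show 3 * i + (3 * x.length + 2 - 3 * i) = 3 * x.length + 2 by omega]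
    exact .haltF (getElem?_normalForm_tail (r := 2) (by norm_num))

end Simulation

end NormalForm

theorem normal_form_general {S : Type*} (H : FU S) (x : List Instr)
    (hx : InstrSeqOver H.iface x) :
    ∃ u : List Instr,
      (∀ v ∈ u, (∃ m, v = Instr.postest m) ∨ (∃ l, v = Instr.fjump l) ∨
        (∃ l, v = Instr.bjump l)) ∧
      InstrSeqOver H.iface (u ++ [Instr.haltT, Instr.haltF]) ∧
      ∀ s b s', Exec H (u ++ [Instr.haltT, Instr.haltF]) 0 s b s' ↔
        Exec H x 0 s b s' := by
  refine ⟨NormalForm.compile x, fun v hv => ?_, ⟨by simp, fun v hv => ?_⟩, fun s b s' =>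
    ⟨fun h => (NormalForm.sourceRun_of_exec_normalForm h).start 0 rfl,
      NormalForm.exec_normalForm_of_exec⟩⟩
  · rcases NormalForm.mem_compile hv with rfl | ⟨u, -, i, hv⟩
    · exact .inr (.inl ⟨0, rfl⟩)
    · exact NormalForm.mem_block hv
  · rcases List.mem_append.mp hv with hv | hv
    · rcases NormalForm.mem_compile hv with rfl | ⟨u, hu, i, hv⟩
      · trivial
      · exact NormalForm.namesIn_of_mem_block (hx.2 u hu) hv
    · simp only [List.mem_cons, List.not_mem_nil, or_false] at hv
      rcases hv with rfl | rfl <;> trivial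

/-- Normal form: for every nonempty `S`, functional unit `H` for `S`, and instruction
sequence `x` over `I(H)`, there is an instruction sequence `y = u_1,…,u_k,!t,!f` over
`I(H)`, with each `u_i` a positive test, forward jump, or backward jump instruction,
such that `⌈y⌉_H = ⌈x⌉_H` as partial functions. -/
theorem normal_form {S : Type*} [Nonempty S] (H : FU S) (x : List Instr)
    (hx : InstrSeqOver H.iface x) :
    ∃ u : List Instr,
      (∀ v ∈ u, (∃ m, v = Instr.postest m) ∨ (∃ l, v = Instr.fjump l) ∨
        (∃ l, v = Instr.bjump l)) ∧
      InstrSeqOver H.iface (u ++ [Instr.haltT, Instr.haltF]) ∧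
      ∀ s b s', Exec H (u ++ [Instr.haltT, Instr.haltF]) 0 s b s' ↔
        Exec H x 0 s b s' :=
  normal_form_general H x hx
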